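/- arXiv:1102.3199 — 7 statements merged into one kernel-verified Lean document; each statement's English description precedes it below -/
import Mathlib

section
/- Let X be a nonempty compact Hausdorff space and let (X; f_1, …, f_N) be a point-fibred iterated function system on X, with coding map π : I^∞ → X. Then π is continuous, where I^∞ = {1,…,N}^ℕ carries the product topology with each factor {1,…,N} discrete. -/
/-!
The image `Aₖ(σ)` of `X` under the first `k` maps along `σ` is compact and depends only on
`σ 0, …, σ (k-1)`. These sets decrease to `{π σ}`, so by compactness some `Aₖ(σ)` lies inside a
given neighbourhood `U` of `π σ`; every `τ` in the cylinder of `σ` of length `k` then has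
`π τ ∈ Aₖ(τ) = Aₖ(σ) ⊆ U`.
-/

/-- `seqComp f σ k = f (σ 0) ∘ f (σ 1) ∘ ⋯ ∘ f (σ (k-1))`, the composition of the
first `k` maps along the code `σ` (applied innermost-last). -/
def seqComp {X : Type*} {N : ℕ} (f : Fin N → X → X) (σ : ℕ → Fin N) : ℕ → X → X
  | 0 => id
  | k + 1 => seqComp f σ k ∘ f (σ k)

open Filter Topology

section SeqComp

variable {X : Type*} {N : ℕ} (f : Fin N → X → X)

lemma seqComp_congr {σ τ : ℕ → Fin N} (k : ℕ) (h : ∀ i < k, σ i = τ i) :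
    seqComp f σ k = seqComp f τ k := by
  induction k with
  | zero => rfl
  | succ k ih =>
    rw [seqComp, seqComp, ih fun i hi => h i (Nat.lt_succ_of_lt hi), h k (Nat.lt_succ_self k)]

lemma continuous_seqComp [TopologicalSpace X] (hf : ∀ i, Continuous (f i)) (σ : ℕ → Fin N)
    (k : ℕ) : Continuous (seqComp f σ k) := by
  induction k with
  | zero => exact continuous_id
  | succ k ih => exact ih.comp (hf (σ k))

lemma antitone_image_seqComp (σ : ℕ → Fin N) :
    Antitone fun k => seqComp f σ k '' Set.univ := by
  refine antitone_nat_of_succ_le fun k => ?_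
  rw [seqComp, Set.image_comp]
  exact Set.image_mono (Set.subset_univ _)

end SeqComp

lemma eventually_nhds_forall_lt_eq {α : Type*} [TopologicalSpace α] [DiscreteTopology α]
    (σ : ℕ → α) (k : ℕ) : ∀ᶠ τ in 𝓝 σ, ∀ i < k, σ i = τ i := by
  filter_upwards [set_pi_mem_nhds (Set.finite_Iio k) fun i _ =>
    (isOpen_discrete {σ i}).mem_nhds rfl] with τ hτ i hi
  exact (hτ i hi).symm

theorem coding_map_continuous_general
    {X : Type*} [TopologicalSpace X] [CompactSpace X] [T2Space X]
    {N : ℕ} (f : Fin N → X → X) (hf : ∀ i, Continuous (f i))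
    (π : (ℕ → Fin N) → X)
    (hπ : ∀ σ : ℕ → Fin N,
      (⋂ k : ℕ, seqComp f σ k '' (Set.univ : Set X)) = {π σ}) :
    Continuous π := by
  refine continuous_iff_continuousAt.2 fun σ U (hU : U ∈ 𝓝 (π σ)) => ?_
  obtain ⟨k, hk⟩ := exists_subset_nhds_of_isCompact (U := U)
    (antitone_image_seqComp f σ).directed_ge
    (fun k => isCompact_univ.image (continuous_seqComp f hf σ k))
    fun x hx => by
      rw [hπ σ, Set.mem_singleton_iff] at hx
      exact hx ▸ hU
  show ∀ᶠ τ in 𝓝 σ, π τ ∈ U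
  filter_upwards [eventually_nhds_forall_lt_eq σ k] with τ hτ
  have hτk : π τ ∈ seqComp f τ k '' Set.univ := Set.mem_iInter.1 ((hπ τ).ge rfl) k
  rw [← seqComp_congr f k hτ] at hτk
  exact hk hτk

/-- For a point-fibred IFS `(X; f_1, …, f_N)` on a nonempty compact
Hausdorff space, the coding map `π : I^∞ → X` is continuous, where the code space
`I^∞ = {1,…,N}^ℕ` carries the product topology with discrete factors. -/
theorem coding_map_continuous
    {X : Type*} [TopologicalSpace X] [CompactSpace X] [T2Space X] [Nonempty X]
    {N : ℕ} (hN : 0 < N) (f : Fin N → X → X) (hf : ∀ i, Continuous (f i))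
    (π : (ℕ → Fin N) → X)
    (hπ : ∀ σ : ℕ → Fin N,
      (⋂ k : ℕ, seqComp f σ k '' (Set.univ : Set X)) = {π σ}) :
    Continuous π :=
  coding_map_continuous_general f hf π hπ
end

section
/- Let X be a nonempty compact Hausdorff space and let (X; f_1, …, f_N) be a point-fibred iterated function system on X with coding map π : I^∞ → X. Then for every nonempty compact set B ⊆ X, every σ ∈ I^∞, and every open set U ⊆ X with π(σ) ∈ U, there exists K such that (f_{σ_1}∘f_{σ_2}∘…∘f_{σ_k})(B) ⊆ U for all k ≥ K; that is, the sets f_{σ|k}(B) converge to the singleton {π(σ)}. -/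
lemma seqComp_continuous {X : Type*} [TopologicalSpace X] {N : ℕ}
    (f : Fin N → X → X) (hf : ∀ i, Continuous (f i)) (σ : ℕ → Fin N) :
    ∀ k, Continuous (seqComp f σ k)
  | 0 => continuous_id
  | k + 1 => (seqComp_continuous f hf σ k).comp (hf (σ k))

lemma seqComp_antitone {X : Type*} {N : ℕ} (f : Fin N → X → X) (σ : ℕ → Fin N) :
    Antitone (fun k => seqComp f σ k '' (Set.univ : Set X)) := by
  apply antitone_nat_of_succ_le
  intro k
  intro x hx
  obtain ⟨y, -, rfl⟩ := hx
  exact ⟨f (σ k) y, trivial, rfl⟩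

/-- For a point-fibred IFS with coding map `π`, for every nonempty compact
`B ⊆ X`, every `σ ∈ I^∞`, and every open `U ∋ π σ`, the sets `f_{σ|k}(B)` are eventually
contained in `U`; that is, `f_{σ|k}(B) → {π σ}`. -/
theorem seqComp_image_tendsto_singleton
    {X : Type*} [TopologicalSpace X] [CompactSpace X] [T2Space X] [Nonempty X]
    {N : ℕ} (hN : 0 < N) (f : Fin N → X → X) (hf : ∀ i, Continuous (f i))
    (π : (ℕ → Fin N) → X)
    (hπ : ∀ σ : ℕ → Fin N,
      (⋂ k : ℕ, seqComp f σ k '' (Set.univ : Set X)) = {π σ}) :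
    ∀ B : Set X, B.Nonempty → IsCompact B → ∀ σ : ℕ → Fin N,
      ∀ U : Set X, IsOpen U → π σ ∈ U →
        ∃ K : ℕ, ∀ k ≥ K, seqComp f σ k '' B ⊆ U := by
  intro B _ _ σ U hU hπU
  set C : ℕ → Set X := fun k => seqComp f σ k '' (Set.univ : Set X) with hC
  have hCc : ∀ k, IsCompact (C k) := fun k =>
    isCompact_univ.image (seqComp_continuous f hf σ k)
  have hcl : ∀ k, IsClosed (C k) := fun k => (hCc k).isClosed
  -- Uᶜ is compact, C k are closed, intersection with ⋂ C k is empty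
  have hemp : Uᶜ ∩ ⋂ k, C k = ∅ := by
    rw [hπ σ]
    ext x
    simp only [Set.mem_inter_iff, Set.mem_compl_iff, Set.mem_singleton_iff,
      Set.mem_empty_iff_false, iff_false]
    rintro ⟨hx, rfl⟩
    exact hx hπU
  obtain ⟨t, ht⟩ := (hU.isClosed_compl.isCompact).elim_finite_subfamily_closed C hcl hemp
  obtain ⟨K, hK⟩ : ∃ K : ℕ, ∀ k ∈ t, k ≤ K := t.exists_le
  refine ⟨K, fun k hk x hx => ?_⟩
  have hxC : x ∈ C k := by
    obtain ⟨y, -, rfl⟩ := hx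
    exact ⟨y, trivial, rfl⟩
  by_contra hxU
  have : x ∈ Uᶜ ∩ ⋂ i ∈ t, C i := by
    refine ⟨hxU, Set.mem_iInter₂.2 fun i hi => ?_⟩
    exact seqComp_antitone f σ ((hK i hi).trans hk) hxC
  rw [ht] at this
  exact this
end

section
/- Let X be a nonempty compact Hausdorff space, let (X; f_1, …, f_N) be a point-fibred iterated function system on X with attractor A = π(I^∞), and define F(B) = ⋃_{i=1}^N f_i(B) for B ⊆ X. Then for every nonempty compact set B ⊆ X the iterates F^k(B) converge to A in the Vietoris sense: (a) for every open set U ⊇ A there exists K such that F^k(B) ⊆ U for all k ≥ K, and (b) for every open set V with V ∩ A ≠ ∅ there exists K such that F^k(B) ∩ V ≠ ∅ for all k ≥ K. In particular A is an attractor of the IFS whose basin is all of X. -/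
/-- The Hutchinson set map `F(B) = ⋃_{i=1}^N f_i(B)`. -/
def Fmap {X : Type*} {N : ℕ} (f : Fin N → X → X) (B : Set X) : Set X :=
  ⋃ i, f i '' B

/-!
Every point of `F^k(B)` has the form `f_{σ_0} ∘ ⋯ ∘ f_{σ_{k-1}} (b)` with `b ∈ B`, so it lies in
the `k`-th cell `f_{σ_0} ∘ ⋯ ∘ f_{σ_{k-1}} (X)` of some address `σ`. For a fixed `σ` these cells
are nested compact sets shrinking to `π σ`, hence eventually inside any open `U ⊇ A`; the level
at which this happens depends only on a finite prefix of `σ`, so compactness of the code space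
makes it uniform in `σ`, which gives (a). For (b), follow one address `σ` with `π σ ∈ V` starting
from any point of `B`.
-/

open Set PiNat Filter

namespace seqComp

variable {X : Type*} {N : ℕ} (f : Fin N → X → X)

lemma eq_of_mem_cylinder {σ τ : ℕ → Fin N} {k : ℕ} (h : τ ∈ cylinder σ k) :
    seqComp f τ k = seqComp f σ k := by
  induction k with
  | zero => rfl
  | succ k ih =>
    rw [mem_cylinder_iff] at h
    change seqComp f τ k ∘ f (τ k) = seqComp f σ k ∘ f (σ k)
    rw [ih (mem_cylinder_iff.2 fun j hj => h j (Nat.lt_succ_of_lt hj)), h k k.lt_succ_self]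

lemma continuous [TopologicalSpace X] (hf : ∀ i, Continuous (f i)) (σ : ℕ → Fin N) (k : ℕ) :
    Continuous (seqComp f σ k) := by
  induction k with
  | zero => exact continuous_id
  | succ k ih => exact ih.comp (hf (σ k))

lemma antitone_image_univ (σ : ℕ → Fin N) : Antitone fun k => seqComp f σ k '' univ := by
  refine antitone_nat_of_succ_le fun k => ?_
  change seqComp f σ k ∘ f (σ k) '' univ ⊆ _
  rw [image_comp]
  exact image_mono (subset_univ _)

lemma mem_iterate_Fmap (σ : ℕ → Fin N) (k : ℕ) {B : Set X} {b : X} (hb : b ∈ B) :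
    seqComp f σ k b ∈ (Fmap f)^[k] B := by
  induction k generalizing B b with
  | zero => exact hb
  | succ k ih =>
    rw [Function.iterate_succ_apply]
    exact ih (mem_iUnion.2 ⟨σ k, b, hb, rfl⟩)

lemma exists_eq_of_mem_iterate_succ_Fmap {B : Set X} {x : X} (k : ℕ)
    (hx : x ∈ (Fmap f)^[k + 1] B) : ∃ σ : ℕ → Fin N, ∃ b ∈ B, seqComp f σ (k + 1) b = x := by
  induction k generalizing B with
  | zero =>
    obtain ⟨i, b, hb, rfl⟩ := mem_iUnion.1 hx
    exact ⟨fun _ => i, b, hb, rfl⟩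
  | succ k ih =>
    rw [Function.iterate_succ_apply] at hx
    obtain ⟨σ, y, hy, rfl⟩ := ih hx
    obtain ⟨i, b, hb, rfl⟩ := mem_iUnion.1 hy
    refine ⟨Function.update σ (k + 1) i, b, hb, ?_⟩
    change seqComp f _ (k + 1) (f (Function.update σ (k + 1) i (k + 1)) b) = _
    rw [Function.update_self, eq_of_mem_cylinder f (update_mem_cylinder σ (k + 1) i)]

lemma isOpen_setOf_image_univ_subset (k : ℕ) (U : Set X) :
    IsOpen {σ : ℕ → Fin N | seqComp f σ k '' univ ⊆ U} := by
  refine isOpen_iff_forall_mem_open.2 fun σ hσ => ⟨cylinder σ k, fun τ hτ => ?_,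
    isOpen_cylinder _ σ k, self_mem_cylinder σ k⟩
  rwa [mem_ofPred_eq, eq_of_mem_cylinder f hτ]

lemma eventually_image_univ_subset [TopologicalSpace X] [CompactSpace X] [T2Space X]
    (hf : ∀ i, Continuous (f i)) {σ : ℕ → Fin N} {p : X}
    (hσ : ⋂ k, seqComp f σ k '' univ = {p}) {U : Set X} (hU : IsOpen U) (hpU : p ∈ U) :
    ∀ᶠ k in atTop, seqComp f σ k '' univ ⊆ U := by
  obtain ⟨K, hK⟩ := exists_subset_nhds_of_isCompact (antitone_image_univ f σ).directed_ge
    (fun k => isCompact_univ.image (seqComp.continuous f hf σ k))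
    (fun x hx => hU.mem_nhds (by rw [hσ, mem_singleton_iff] at hx; rwa [hx]))
  exact eventually_atTop.2 ⟨K, fun k hk => (antitone_image_univ f σ hk).trans hK⟩

end seqComp

theorem iterates_converge_to_attractor_general
    {X : Type*} [TopologicalSpace X] [CompactSpace X] [T2Space X]
    {N : ℕ} (f : Fin N → X → X) (hf : ∀ i, Continuous (f i))
    (π : (ℕ → Fin N) → X)
    (hπ : ∀ σ : ℕ → Fin N,
      (⋂ k : ℕ, seqComp f σ k '' (Set.univ : Set X)) = {π σ}) :
    ∀ B : Set X, B.Nonempty → IsCompact B →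
      (∀ U : Set X, IsOpen U → Set.range π ⊆ U →
        ∃ K : ℕ, ∀ k ≥ K, (Fmap f)^[k] B ⊆ U) ∧
      (∀ V : Set X, IsOpen V → (Set.range π ∩ V).Nonempty →
        ∃ K : ℕ, ∀ k ≥ K, ((Fmap f)^[k] B ∩ V).Nonempty) := by
  rintro B ⟨b, hb⟩ -
  constructor
  · intro U hU hAU
    set W : ℕ → Set (ℕ → Fin N) := fun k => {σ | seqComp f σ k '' univ ⊆ U}
    have hW_mono : Monotone W := fun _ _ hkl _ hσ =>
      (seqComp.antitone_image_univ f _ hkl).trans hσ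
    obtain ⟨K, hK⟩ := isCompact_univ.elim_directed_cover W
      (fun k => seqComp.isOpen_setOf_image_univ_subset f k U)
      (fun σ _ => mem_iUnion.2
        ((seqComp.eventually_image_univ_subset f hf (hπ σ) hU (hAU (mem_range_self σ))).exists))
      hW_mono.directed_le
    -- `K + 1` rather than `K`: points of `F^0(B) = B` need not have an address (for `N = 0`).
    refine ⟨K + 1, fun k hk x hx => ?_⟩
    obtain ⟨m, rfl⟩ := Nat.exists_eq_add_of_le' (Nat.one_le_of_lt hk)
    obtain ⟨σ, b, -, rfl⟩ := seqComp.exists_eq_of_mem_iterate_succ_Fmap f m hx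
    exact hW_mono (by omega) (hK (mem_univ σ)) (mem_image_of_mem _ (mem_univ b))
  · rintro V hV ⟨_, ⟨σ, rfl⟩, hσV⟩
    obtain ⟨K, hK⟩ :=
      eventually_atTop.1 (seqComp.eventually_image_univ_subset f hf (hπ σ) hV hσV)
    exact ⟨K, fun k hk =>
      ⟨_, seqComp.mem_iterate_Fmap f σ k hb, hK k hk (mem_image_of_mem _ (mem_univ b))⟩⟩

/-- For a point-fibred IFS with attractor `A = π(I^∞)` and Hutchinson map
`F(B) = ⋃ i, f i '' B`, for every nonempty compact `B` the iterates `F^k(B)` converge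
to `A` in the Vietoris sense: (a) for every open `U ⊇ A` eventually `F^k(B) ⊆ U`, and
(b) for every open `V` meeting `A` eventually `F^k(B) ∩ V ≠ ∅`. -/
theorem iterates_converge_to_attractor
    {X : Type*} [TopologicalSpace X] [CompactSpace X] [T2Space X] [Nonempty X]
    {N : ℕ} (hN : 0 < N) (f : Fin N → X → X) (hf : ∀ i, Continuous (f i))
    (π : (ℕ → Fin N) → X)
    (hπ : ∀ σ : ℕ → Fin N,
      (⋂ k : ℕ, seqComp f σ k '' (Set.univ : Set X)) = {π σ}) :
    ∀ B : Set X, B.Nonempty → IsCompact B →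
      (∀ U : Set X, IsOpen U → Set.range π ⊆ U →
        ∃ K : ℕ, ∀ k ≥ K, (Fmap f)^[k] B ⊆ U) ∧
      (∀ V : Set X, IsOpen V → (Set.range π ∩ V).Nonempty →
        ∃ K : ℕ, ∀ k ≥ K, ((Fmap f)^[k] B ∩ V).Nonempty) :=
  iterates_converge_to_attractor_general f hf π hπ
end

section
/- Let (X; f_1, …, f_N) be an injective point-fibred iterated function system on a nonempty compact Hausdorff space X, with coding map π : I^∞ → X and attractor A = π(I^∞). Let {M_1, …, M_N} be a mask for the IFS, let T : A → A be the associated masked dynamical system, and for x ∈ A let σ(x) = σ_1(x)σ_2(x)… ∈ I^∞ be its itinerary, where σ_k(x) is the unique index i with T^{k-1}(x) ∈ M_i. Then π(σ(x)) = x for every x ∈ A, and the map x ↦ σ(x) is injective; consequently Ω_M = {σ(x) : x ∈ A} is an address space for the IFS. -/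
/-- For an injective point-fibred IFS with attractor `A = π(I^∞)`,
mask `{M_i}`, masked dynamical system `T` (so `f_i (T x) = x` whenever `x ∈ M_i`),
and itinerary map `itin` (so `T^k x ∈ M_{itin x k}`), one has `π (itin x) = x` for
every `x ∈ A` and `itin` is injective on `A`; hence `Ω_M = itin '' A` is an address
space for the IFS. -/
theorem masked_itinerary_is_address_space
    {X : Type*} [TopologicalSpace X] [CompactSpace X] [T2Space X] [Nonempty X]
    {N : ℕ} (hN : 0 < N) (f : Fin N → X → X) (hf : ∀ i, Continuous (f i))
    (hinj : ∀ i, Function.Injective (f i))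
    (π : (ℕ → Fin N) → X)
    (hπ : ∀ σ : ℕ → Fin N,
      (⋂ k : ℕ, seqComp f σ k '' (Set.univ : Set X)) = {π σ})
    (M : Fin N → Set X)
    (hMsub : ∀ i, M i ⊆ f i '' Set.range π)
    (hMdisj : ∀ i j, i ≠ j → Disjoint (M i) (M j))
    (hMcover : ⋃ i, M i = Set.range π)
    (T : X → X) (hT : ∀ i, ∀ x ∈ M i, f i (T x) = x)
    (itin : X → ℕ → Fin N)
    (hitin : ∀ x ∈ Set.range π, ∀ k : ℕ, T^[k] x ∈ M (itin x k)) :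
    (∀ x ∈ Set.range π, π (itin x) = x) ∧ Set.InjOn itin (Set.range π) := by
  have key : ∀ x ∈ Set.range π, π (itin x) = x := by
    intro x hx
    have hcomp : ∀ k : ℕ, seqComp f (itin x) k (T^[k] x) = x := by
      intro k
      induction k with
      | zero => rfl
      | succ k ih =>
        have h1 : f (itin x k) (T (T^[k] x)) = T^[k] x :=
          hT (itin x k) _ (hitin x hx k)
        calc seqComp f (itin x) (k + 1) (T^[k+1] x)
            = seqComp f (itin x) k (f (itin x k) (T (T^[k] x))) := by
              simp [seqComp, Function.iterate_succ_apply']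
          _ = seqComp f (itin x) k (T^[k] x) := by rw [h1]
          _ = x := ih
    have hmem : x ∈ ⋂ k : ℕ, seqComp f (itin x) k '' (Set.univ : Set X) := by
      refine Set.mem_iInter.2 fun k => ⟨T^[k] x, Set.mem_univ _, hcomp k⟩
    rw [hπ (itin x)] at hmem
    exact hmem.symm
  refine ⟨key, fun x hx y hy h => ?_⟩
  rw [← key x hx, ← key y hy, h]
end

section
/- Let (X; f_1, …, f_N) be an injective point-fibred iterated function system on a nonempty compact Hausdorff space X, with attractor A, mask {M_1, …, M_N}, masked section τ : A → I^∞, and masked address space Ω_M = τ(A). If there exists an index i with M_i = f_i(A), then the shift map S satisfies S(Ω_M) = Ω_M. -/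
/-- For an injective point-fibred IFS with attractor `A = π(I^∞)`,
mask `{M_i}`, masked dynamical system `T`, masked section (itinerary map) `itin`
and masked address space `Ω_M = itin '' A`: if some `M_i` equals `f_i(A)`, then the
shift map `S` satisfies `S(Ω_M) = Ω_M`. -/
theorem shift_surjective_on_masked_address_space
    {X : Type*} [TopologicalSpace X] [CompactSpace X] [T2Space X] [Nonempty X]
    {N : ℕ} (hN : 0 < N) (f : Fin N → X → X) (hf : ∀ i, Continuous (f i))
    (hinj : ∀ i, Function.Injective (f i))
    (π : (ℕ → Fin N) → X)
    (hπ : ∀ σ : ℕ → Fin N,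
      (⋂ k : ℕ, seqComp f σ k '' (Set.univ : Set X)) = {π σ})
    (M : Fin N → Set X)
    (hMsub : ∀ i, M i ⊆ f i '' Set.range π)
    (hMdisj : ∀ i j, i ≠ j → Disjoint (M i) (M j))
    (hMcover : ⋃ i, M i = Set.range π)
    (T : X → X) (hT : ∀ i, ∀ x ∈ M i, f i (T x) = x)
    (itin : X → ℕ → Fin N)
    (hitin : ∀ x ∈ Set.range π, ∀ k : ℕ, T^[k] x ∈ M (itin x k))
    (hfull : ∃ i, M i = f i '' Set.range π) :
    (fun σ : ℕ → Fin N => fun k => σ (k + 1)) '' (itin '' Set.range π) =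
      itin '' Set.range π := by
  have idx_eq : ∀ {x : X} {i j : Fin N}, x ∈ M i → x ∈ M j → i = j := by
    intro x i j hi hj
    by_contra h
    exact (Set.disjoint_left.mp (hMdisj i j h)) hi hj
  have hTmap : ∀ x ∈ Set.range π, T x ∈ Set.range π := by
    intro x hx
    have : x ∈ ⋃ i, M i := hMcover ▸ hx
    obtain ⟨_, ⟨i, rfl⟩, hxi⟩ := this
    obtain ⟨y, hy, hyx⟩ := hMsub i hxi
    have : f i (T x) = f i y := by rw [hT i x hxi, hyx]
    exact (hinj i this) ▸ hy
  have hshift : ∀ x ∈ Set.range π, (fun k => itin x (k + 1)) = itin (T x) := by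
    intro x hx
    funext k
    exact idx_eq (Function.iterate_succ_apply T k x ▸ hitin x hx (k + 1))
      (hitin (T x) (hTmap x hx) k)
  apply Set.Subset.antisymm
  · rintro _ ⟨_, ⟨x, ⟨σ, rfl⟩, rfl⟩, rfl⟩
    exact ⟨T (π σ), hTmap _ ⟨σ, rfl⟩, (hshift _ ⟨σ, rfl⟩).symm⟩
  · rintro _ ⟨x, hx, rfl⟩
    obtain ⟨i, hi⟩ := hfull
    have hyM : f i x ∈ M i := hi ▸ ⟨x, hx, rfl⟩
    have hyA : f i x ∈ Set.range π := hMcover ▸ Set.mem_iUnion.mpr ⟨i, hyM⟩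
    have hTy : T (f i x) = x := hinj i (hT i _ hyM)
    refine ⟨itin (f i x), ⟨f i x, hyA, rfl⟩, ?_⟩
    simp only
    rw [hshift _ hyA, hTy]
end

section
/- Let (X; f_1, …, f_N) be an injective point-fibred iterated function system on a nonempty compact Hausdorff space X with attractor A. Let M = {M_1,…,M_N} and M' = {M'_1,…,M'_N} be two masks for the IFS, with masked dynamical system T : A → A associated to M and masked sections τ_M, τ_{M'} : A → I^∞ associated to M and M' respectively. Let μ be a measure on A such that the set {x ∈ A : T^k(x) ∉ ⋃_{i=1}^N (M_i Δ M'_i) for all k ≥ 0} has μ-measure zero (here Δ denotes symmetric difference). Then τ_M(x) ≠ τ_{M'}(x) for μ-almost every x ∈ A. -/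
/-- Let `M` and `M'` be two masks for an injective point-fibred IFS with
attractor `A = π(I^∞)`, with masked dynamical systems `T`, `T'` and masked sections
(itinerary maps) `itin`, `itin'`. Let `μ` be a measure such that the set of `x ∈ A`
whose `T`-orbit never meets `⋃ i, M_i Δ M'_i` has measure zero. Then
`itin x ≠ itin' x` for `μ`-almost every `x ∈ A`. -/
theorem masked_sections_ae_distinct
    {X : Type*} [TopologicalSpace X] [CompactSpace X] [T2Space X] [Nonempty X]
    [MeasurableSpace X]
    {N : ℕ} (hN : 0 < N) (f : Fin N → X → X) (hf : ∀ i, Continuous (f i))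
    (hinj : ∀ i, Function.Injective (f i))
    (π : (ℕ → Fin N) → X)
    (hπ : ∀ σ : ℕ → Fin N,
      (⋂ k : ℕ, seqComp f σ k '' (Set.univ : Set X)) = {π σ})
    (M M' : Fin N → Set X)
    (hMsub : ∀ i, M i ⊆ f i '' Set.range π)
    (hMdisj : ∀ i j, i ≠ j → Disjoint (M i) (M j))
    (hMcover : ⋃ i, M i = Set.range π)
    (hM'sub : ∀ i, M' i ⊆ f i '' Set.range π)
    (hM'disj : ∀ i j, i ≠ j → Disjoint (M' i) (M' j))
    (hM'cover : ⋃ i, M' i = Set.range π)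
    (T : X → X) (hT : ∀ i, ∀ x ∈ M i, f i (T x) = x)
    (T' : X → X) (hT' : ∀ i, ∀ x ∈ M' i, f i (T' x) = x)
    (itin : X → ℕ → Fin N)
    (hitin : ∀ x ∈ Set.range π, ∀ k : ℕ, T^[k] x ∈ M (itin x k))
    (itin' : X → ℕ → Fin N)
    (hitin' : ∀ x ∈ Set.range π, ∀ k : ℕ, T'^[k] x ∈ M' (itin' x k))
    (μ : MeasureTheory.Measure X)
    (hnull : μ {x | x ∈ Set.range π ∧
      ∀ k : ℕ, T^[k] x ∉ ⋃ i, symmDiff (M i) (M' i)} = 0) :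
    μ {x | x ∈ Set.range π ∧ itin x = itin' x} = 0 := by
  refine MeasureTheory.measure_mono_null (fun x hx => ?_) hnull
  obtain ⟨hxA, heq⟩ := hx
  have key : ∀ k, T^[k] x = T'^[k] x ∧ T^[k] x ∈ M' (itin x k) := by
    intro k
    induction k with
    | zero =>
      refine ⟨rfl, ?_⟩
      simpa [heq] using hitin' x hxA 0
    | succ k ih =>
      obtain ⟨hTk, hM'k⟩ := ih
      have hMk := hitin x hxA k
      have h1 : f (itin x k) (T (T^[k] x)) = T^[k] x := hT _ _ hMk
      have h2 : f (itin x k) (T' (T^[k] x)) = T^[k] x := hT' _ _ hM'k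
      have hstep : T^[k+1] x = T'^[k+1] x := by
        rw [Function.iterate_succ_apply', Function.iterate_succ_apply', ← hTk]
        exact hinj _ (h1.trans h2.symm)
      refine ⟨hstep, ?_⟩
      have := hitin' x hxA (k + 1)
      rw [← heq, ← hstep] at this
      exact this
  refine ⟨hxA, fun k hk => ?_⟩
  obtain ⟨_, hM'k⟩ := key k
  have hMk := hitin x hxA k
  simp only [Set.mem_iUnion] at hk
  obtain ⟨j, hj⟩ := hk
  rw [Set.mem_symmDiff] at hj
  by_cases hji : j = itin x k
  · subst hji
    rcases hj with ⟨_, h⟩ | ⟨_, h⟩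
    · exact h hM'k
    · exact h hMk
  · rcases hj with ⟨h, _⟩ | ⟨h, _⟩
    · exact (hMdisj j _ hji).ne_of_mem h hMk rfl
    · exact (hM'disj j _ hji).ne_of_mem h hM'k rfl
end

section
/- Let t ∈ [1/2, 1) and define the masked dynamical system T : [0,1] → [0,1] by T(x) = x/t for x ∈ [0, 1/2] and T(x) = (1-x)/t for x ∈ (1/2, 1]. Then for every x ∈ (0,1) there exists a positive integer n such that T^k(x) ∈ [(2t-1)/(2t²), 1/(2t)] for all k ≥ n; that is, every orbit starting in (0,1) eventually enters and remains in the trapping interval [(2t-1)/(2t²), 1/(2t)]. -/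
/-- For `t ∈ [1/2, 1)`, the masked (tent-type) dynamical system
`T : [0,1] → [0,1]`, `T x = x/t` on `[0,1/2]` and `T x = (1-x)/t` on `(1/2,1]`, has the
property that every orbit starting in `(0,1)` eventually enters and remains in the
trapping interval `[(2t-1)/(2t²), 1/(2t)]`. -/
theorem tent_map_trapping_interval
    (t : ℝ) (ht : t ∈ Set.Ico (1/2 : ℝ) 1)
    (T : ℝ → ℝ)
    (hT1 : ∀ x : ℝ, x ≤ 1/2 → T x = x / t)
    (hT2 : ∀ x : ℝ, 1/2 < x → T x = (1 - x) / t) :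
    ∀ x ∈ Set.Ioo (0 : ℝ) 1, ∃ n : ℕ, 0 < n ∧
      ∀ k ≥ n, T^[k] x ∈ Set.Icc ((2*t - 1) / (2*t^2)) (1 / (2*t)) := by
  obtain ⟨ht1, ht2⟩ := ht
  have htpos : 0 < t := by linarith
  set a := (2*t - 1) / (2*t^2) with ha_def
  set b := 1 / (2*t) with hb_def
  have hA : a * (2*t^2) = 2*t - 1 := by
    rw [ha_def]; field_simp
  have hB : b * (2*t) = 1 := by
    rw [hb_def]; field_simp
  have ha0 : 0 ≤ a := by
    rw [ha_def]; apply div_nonneg <;> nlinarith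
  have ha_half : a ≤ 1/2 := by nlinarith [sq_nonneg (t - 1), sq_nonneg t]
  have hb_half : 1/2 ≤ b := by nlinarith
  have hb1 : b ≤ 1 := by nlinarith
  have hab : a ≤ b := le_trans ha_half hb_half
  -- invariance of [a, b]
  have hinv : ∀ x : ℝ, a ≤ x → x ≤ b → a ≤ T x ∧ T x ≤ b := by
    intro x hax hxb
    rcases le_or_gt x (1/2) with h | h
    · rw [hT1 x h]
      constructor
      · rw [le_div_iff₀ htpos]; nlinarith
      · rw [div_le_iff₀ htpos]; nlinarith
    · rw [hT2 x h]
      constructor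
      · rw [le_div_iff₀ htpos]; nlinarith
      · rw [div_le_iff₀ htpos]; nlinarith
  -- points below a grow until entering [a,b]
  have hent : ∀ n : ℕ, ∀ x : ℝ, 0 < x → x ≤ b → a * t^n ≤ x →
      ∃ m : ℕ, a ≤ T^[m] x ∧ T^[m] x ≤ b := by
    intro n
    induction n with
    | zero =>
        intro x hx hxb hax
        exact ⟨0, by simpa using hax, by simpa using hxb⟩
    | succ n ih =>
        intro x hx hxb hax
        rcases le_or_gt a x with h | h
        · exact ⟨0, by simpa using h, by simpa using hxb⟩
        · have hx2 : x ≤ 1/2 := le_trans h.le ha_half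
          have hTx : T x = x / t := hT1 x hx2
          have h1 : 0 < x / t := by positivity
          have h2 : x / t ≤ b := by
            rw [div_le_iff₀ htpos]; nlinarith
          have h3 : a * t^n ≤ x / t := by
            rw [le_div_iff₀ htpos]
            calc a * t^n * t = a * t^(n+1) := by ring
              _ ≤ x := hax
          obtain ⟨m, hm1, hm2⟩ := ih (x/t) h1 h2 h3
          refine ⟨m+1, ?_, ?_⟩ <;>
            rw [Function.iterate_succ_apply, hTx]
          · exact hm1
          · exact hm2
  -- reaching [a,b] from any point of (0, b]
  have hreach_le : ∀ x : ℝ, 0 < x → x ≤ b →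
      ∃ m : ℕ, a ≤ T^[m] x ∧ T^[m] x ≤ b := by
    intro x hx hxb
    rcases le_or_gt a x with h | h
    · exact ⟨0, by simpa using h, by simpa using hxb⟩
    · have hapos : 0 < a := lt_trans hx h
      obtain ⟨N, hN⟩ := exists_pow_lt_of_lt_one (div_pos hx hapos) ht2
      have hN' : a * t^N ≤ x := by
        have := mul_lt_mul_of_pos_left hN hapos
        rw [mul_div_cancel₀ _ (ne_of_gt hapos)] at this
        linarith
      exact hent N x hx hxb hN'
  have hreach : ∀ x : ℝ, 0 < x → x < 1 →
      ∃ m : ℕ, a ≤ T^[m] x ∧ T^[m] x ≤ b := by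
    intro x hx hx1
    rcases le_or_gt x b with h | h
    · exact hreach_le x hx h
    · have hx2 : 1/2 < x := lt_of_le_of_lt hb_half h
      have hTx : T x = (1 - x) / t := hT2 x hx2
      have h1 : 0 < T x := by rw [hTx]; exact div_pos (by linarith) htpos
      have h2 : T x ≤ b := by
        rw [hTx, div_le_iff₀ htpos]; nlinarith
      obtain ⟨m, hm1, hm2⟩ := hreach_le (T x) h1 h2
      refine ⟨m+1, ?_, ?_⟩ <;> rw [Function.iterate_succ_apply]
      · exact hm1
      · exact hm2
  intro x hx
  obtain ⟨hx0, hx1⟩ := hx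
  obtain ⟨m, hm⟩ := hreach x hx0 hx1
  have hall : ∀ k, m ≤ k → a ≤ T^[k] x ∧ T^[k] x ≤ b := by
    intro k hk
    induction k, hk using Nat.le_induction with
    | base => exact hm
    | succ k hk ih =>
        rw [Function.iterate_succ_apply']
        exact hinv _ ih.1 ih.2
  refine ⟨m + 1, Nat.succ_pos m, ?_⟩
  intro k hk
  obtain ⟨h1, h2⟩ := hall k (by omega)
  exact ⟨h1, h2⟩
end
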